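/- Suppose the nonlinearity m is locally Lipschitz continuous, and let (a,b) be initial data in the energy space such that a_i = b_i = 0 for all i > N for some positive integer N. Then any two global weak solutions with initial data (a,b) coincide; moreover every global weak solution with these data satisfies v_i(t) = 0 for all t ≥ 0 and all i > N. -/

import Mathlib

open Filter Set

/-- Derivative from within the half line `[0, ∞)`. -/
noncomputable def derIci (f : ℝ → ℝ) : ℝ → ℝ := derivWithin f (Set.Ici (0 : ℝ))

/-- The pair `(a, b)` belongs to the energy space `D(A^{1/2}) × H`. -/
def InEnergy (lam a b : ℕ → ℝ) : Prop :=
  Summable fun i => (b i) ^ 2 + (lam i) ^ 2 * (a i) ^ 2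

/-- `R_k(a,b) = Σ_{i>k} (b_i² + λ_i² a_i²)`. -/
noncomputable def Rk (lam a b : ℕ → ℝ) (k : ℕ) : ℝ :=
  ∑' i : ℕ, if k < i then (b i) ^ 2 + (lam i) ^ 2 * (a i) ^ 2 else 0

/-- Lacunary (spectral gap) data: `R_k(a,b)·k²·exp(k λ_k) ≤ 1` for infinitely many
positive integers `k`. -/
def Lacunary (lam a b : ℕ → ℝ) : Prop :=
  InEnergy lam a b ∧
    {k : ℕ | 0 < k ∧
      Rk lam a b k * (k : ℝ) ^ 2 * Real.exp ((k : ℝ) * lam k) ≤ 1}.Infinite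

/-- `M(σ) = ∫₀^σ m(s) ds`. -/
noncomputable def Mfun (m : ℝ → ℝ) (σ : ℝ) : ℝ := ∫ s in (0:ℝ)..σ, m s

/-- The conserved quantity `H₀ = Σ_i b_i² + M(Σ_i λ_i² a_i²)`. -/
noncomputable def H0 (lam : ℕ → ℝ) (m : ℝ → ℝ) (a b : ℕ → ℝ) : ℝ :=
  (∑' i, (b i) ^ 2) + Mfun m (∑' i, (lam i) ^ 2 * (a i) ^ 2)

/-- Galerkin approximation of order `n` (components of index `> n` extended by zero):
the solution of `v_i'' + m(Σ_{j≤n} λ_j² v_j²) λ_i² v_i = 0` for `i ≤ n`, with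
`v_i(0) = a_i`, `v_i'(0) = b_i`. -/
def GalerkinSol (lam : ℕ → ℝ) (m : ℝ → ℝ) (a b : ℕ → ℝ) (n : ℕ)
    (v : ℕ → ℝ → ℝ) : Prop :=
  (∀ i, ContDiffOn ℝ 2 (v i) (Set.Ici 0)) ∧
  (∀ i ≤ n, v i 0 = a i) ∧
  (∀ i ≤ n, derIci (v i) 0 = b i) ∧
  (∀ i, n < i → ∀ t, v i t = 0) ∧
  (∀ i ≤ n, ∀ t, 0 ≤ t →
    derIci (derIci (v i)) t
      + m (∑ j ∈ Finset.range (n + 1), (lam j) ^ 2 * (v j t) ^ 2)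
        * (lam i) ^ 2 * v i t = 0)

/-- Global weak solution with initial data `(a,b)`: a family `v_i ∈ C²([0,∞))` with
`v_i(0) = a_i`, `v_i'(0) = b_i`, such that `Σ v_i'(t)²` and `Σ λ_i² v_i(t)²` converge,
the maps `t ↦ (v_i'(t))_i` and `t ↦ (λ_i v_i(t))_i` are continuous from `[0,∞)` into
`ℓ²`, and `v_i'' + m(Σ_j λ_j² v_j²) λ_i² v_i = 0` for every `i` and every `t ≥ 0`. -/
def WeakSol (lam : ℕ → ℝ) (m : ℝ → ℝ) (a b : ℕ → ℝ) (v : ℕ → ℝ → ℝ) : Prop :=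
  (∀ i, ContDiffOn ℝ 2 (v i) (Set.Ici 0)) ∧
  (∀ i, v i 0 = a i) ∧
  (∀ i, derIci (v i) 0 = b i) ∧
  (∀ t, 0 ≤ t → Summable fun i => (derIci (v i) t) ^ 2) ∧
  (∀ t, 0 ≤ t → Summable fun i => (lam i) ^ 2 * (v i t) ^ 2) ∧
  (∀ t₀, 0 ≤ t₀ → Tendsto (fun t => ∑' i, (derIci (v i) t - derIci (v i) t₀) ^ 2)
      (nhdsWithin t₀ (Set.Ici 0)) (nhds 0)) ∧
  (∀ t₀, 0 ≤ t₀ → Tendsto (fun t => ∑' i, (lam i) ^ 2 * (v i t - v i t₀) ^ 2)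
      (nhdsWithin t₀ (Set.Ici 0)) (nhds 0)) ∧
  (∀ i, ∀ t, 0 ≤ t →
    derIci (derIci (v i)) t
      + m (∑' j, (lam j) ^ 2 * (v j t) ^ 2) * (lam i) ^ 2 * v i t = 0)

/-! The components of index `i > N` have zero data and solve the linear equation
`v_i'' = -m(σ(t)) λ_i² v_i`, where `σ(t) = Σ_j λ_j² v_j(t)²` is continuous because
`t ↦ (λ_j v_j(t))_j` is continuous into `ℓ²`; uniqueness for this Lipschitz ODE forces them to
vanish. The remaining components `(v_0, …, v_N)` then solve a finite-dimensional system whose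
vector field `y ↦ -m(Σ_k λ_k² y_k²) λ_j² y_j` is locally Lipschitz, so Grönwall's uniqueness
theorem applied to the phase-space curve `(v, v')` shows that two solutions coincide. -/

open Topology Metric

lemma memℓp_two_of_summable_sq {ι : Type*} {f : ι → ℝ} (hf : Summable fun i => f i ^ 2) :
    Memℓp f 2 := by
  rw [memℓp_gen_iff (by norm_num)]
  simpa using hf

lemma lp.norm_sq_eq_tsum_sq {ι : Type*} (f : lp (fun _ : ι => ℝ) 2) :
    ‖f‖ ^ 2 = ∑' i, f i ^ 2 := by
  simpa using lp.norm_rpow_eq_tsum (p := 2) (by norm_num) f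

lemma continuousOn_tsum_sq {α ι : Type*} [TopologicalSpace α] {x : α → ι → ℝ} {s : Set α}
    (hx : ∀ t ∈ s, Summable fun i => x t i ^ 2)
    (hcont : ∀ t₀ ∈ s, Tendsto (fun t => ∑' i, (x t i - x t₀ i) ^ 2) (𝓝[s] t₀) (𝓝 0)) :
    ContinuousOn (fun t => ∑' i, x t i ^ 2) s := by
  classical
  let X : α → lp (fun _ : ι => ℝ) 2 := fun t =>
    if h : Summable fun i => x t i ^ 2 then ⟨x t, memℓp_two_of_summable_sq h⟩ else 0
  have hX : ∀ t ∈ s, ⇑(X t) = x t := fun t ht => by simp [X, hx t ht]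
  have hdist : ∀ t₀ ∈ s, ∀ t ∈ s, ‖X t - X t₀‖ = √(∑' i, (x t i - x t₀ i) ^ 2) := by
    intro t₀ ht₀ t ht
    rw [← Real.sqrt_sq (norm_nonneg (X t - X t₀)), lp.norm_sq_eq_tsum_sq]
    simp only [lp.coeFn_sub, Pi.sub_apply, hX t ht, hX t₀ ht₀]
  have hXc : ContinuousOn X s := by
    intro t₀ ht₀
    rw [ContinuousWithinAt, tendsto_iff_norm_sub_tendsto_zero]
    have := (Real.continuous_sqrt.tendsto 0).comp (hcont t₀ ht₀)
    rw [Real.sqrt_zero] at this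
    refine this.congr' (eventually_nhdsWithin_of_forall fun t ht => (hdist t₀ ht₀ t ht).symm)
  refine (hXc.norm.pow 2).congr fun t ht => ?_
  rw [Pi.pow_apply, lp.norm_sq_eq_tsum_sq, hX t ht]

lemma LocallyLipschitzOn.comp_locallyLipschitz {α β γ : Type*} [PseudoEMetricSpace α]
    [PseudoEMetricSpace β] [PseudoEMetricSpace γ] {f : β → γ} {g : α → β} {s : Set β}
    (hf : LocallyLipschitzOn s f) (hg : LocallyLipschitz g) (hgs : ∀ x, g x ∈ s) :
    LocallyLipschitz (f ∘ g) := by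
  intro x
  obtain ⟨Kg, t, ht, hgt⟩ := hg x
  obtain ⟨Kf, u, hu, hfu⟩ := hf (hgs x)
  have hgu : g ⁻¹' u ∈ 𝓝 x :=
    tendsto_nhdsWithin_iff.2 ⟨hg.continuous.tendsto x, Eventually.of_forall hgs⟩ hu
  exact ⟨Kf * Kg, t ∩ g ⁻¹' u, inter_mem ht hgu,
    hfu.comp (hgt.mono inter_subset_left) fun _ hy => hy.2⟩

lemma locallyLipschitz_kirchhoffField {ι : Type*} [Fintype ι] {m : ℝ → ℝ}
    (hm : LocallyLipschitzOn (Ici 0) m) (μ : ι → ℝ) :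
    LocallyLipschitz fun (y : ι → ℝ) j => -m (∑ k, μ k ^ 2 * y k ^ 2) * μ j ^ 2 * y j := by
  have hQ : LocallyLipschitz fun y : ι → ℝ => ∑ k, μ k ^ 2 * y k ^ 2 :=
    ContDiff.locallyLipschitz (𝕂 := ℝ) (by fun_prop)
  have hmQ := hm.comp_locallyLipschitz hQ fun y => mem_Ici.2 (by positivity)
  have hΦ : LocallyLipschitz fun (p : ℝ × (ι → ℝ)) j => -p.1 * μ j ^ 2 * p.2 j :=
    ContDiff.locallyLipschitz (𝕂 := ℝ) (by fun_prop)
  exact (hΦ.comp (hmQ.prodMk LocallyLipschitz.id) :)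

lemma ContDiffOn.contDiffOn_derIci {f : ℝ → ℝ} (hf : ContDiffOn ℝ 2 f (Ici 0)) :
    ContDiffOn ℝ 1 (derIci f) (Ici 0) :=
  hf.derivWithin (uniqueDiffOn_Ici 0) (by norm_num)

lemma ContDiffOn.hasDerivWithinAt_derIci {f : ℝ → ℝ} (hf : ContDiffOn ℝ 1 f (Ici 0)) {t : ℝ}
    (ht : 0 ≤ t) : HasDerivWithinAt f (derIci f t) (Ici t) t :=
  ((hf.differentiableOn one_ne_zero t ht).hasDerivWithinAt).mono (Ici_subset_Ici.2 ht)

noncomputable def phasePoint {ι : Type*} (u : ι → ℝ → ℝ) (t : ℝ) : (ι → ℝ) × (ι → ℝ) :=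
  (fun j => u j t, fun j => derIci (u j) t)

lemma continuousOn_phasePoint {ι : Type*} {u : ι → ℝ → ℝ}
    (hu : ∀ j, ContDiffOn ℝ 2 (u j) (Ici 0)) :
    ContinuousOn (phasePoint u) (Ici 0) :=
  (continuousOn_pi.2 fun j => (hu j).continuousOn).prodMk
    (continuousOn_pi.2 fun j => (hu j).contDiffOn_derIci.continuousOn)

lemma hasDerivWithinAt_phasePoint {ι : Type*} [Fintype ι] {u : ι → ℝ → ℝ}
    (hu : ∀ j, ContDiffOn ℝ 2 (u j) (Ici 0)) {t : ℝ} (ht : 0 ≤ t) :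
    HasDerivWithinAt (phasePoint u) ((phasePoint u t).2, fun j => derIci (derIci (u j)) t)
      (Ici t) t := by
  have h₁ : ∀ j, ContDiffOn ℝ 1 (u j) (Ici 0) := fun j => (hu j).of_le one_le_two
  have hpos : HasDerivWithinAt (fun s j => u j s) (fun j => derIci (u j) t) (Ici t) t :=
    hasDerivWithinAt_pi.2 fun j => (h₁ j).hasDerivWithinAt_derIci ht
  have hvel : HasDerivWithinAt (fun s j => derIci (u j) s)
      (fun j => derIci (derIci (u j)) t) (Ici t) t :=
    hasDerivWithinAt_pi.2 fun j => (hu j).contDiffOn_derIci.hasDerivWithinAt_derIci ht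
  exact hpos.prodMk hvel

theorem eq_of_secondOrderODE {ι : Type*} [Fintype ι] {F : ℝ → (ι → ℝ) → ι → ℝ}
    (hF : ∀ T R : ℝ, ∃ K, ∀ t ∈ Ico 0 T, LipschitzOnWith K (F t) (closedBall 0 R))
    {u w : ι → ℝ → ℝ} (hu : ∀ j, ContDiffOn ℝ 2 (u j) (Ici 0))
    (hw : ∀ j, ContDiffOn ℝ 2 (w j) (Ici 0))
    (hu'' : ∀ t, 0 ≤ t → ∀ j, derIci (derIci (u j)) t = F t (fun k => u k t) j)
    (hw'' : ∀ t, 0 ≤ t → ∀ j, derIci (derIci (w j)) t = F t (fun k => w k t) j)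
    (h₀ : ∀ j, u j 0 = w j 0) (h₀' : ∀ j, derIci (u j) 0 = derIci (w j) 0) :
    ∀ t, 0 ≤ t → ∀ j, u j t = w j t := by
  intro t ht j
  have hIcc : Icc 0 t ⊆ Ici (0 : ℝ) := Icc_subset_Ici_self
  obtain ⟨Ru, hRu⟩ := isCompact_Icc.exists_bound_of_continuousOn
    ((continuousOn_phasePoint hu).mono hIcc)
  obtain ⟨Rw, hRw⟩ := isCompact_Icc.exists_bound_of_continuousOn
    ((continuousOn_phasePoint hw).mono hIcc)
  set R := max Ru Rw
  obtain ⟨K, hK⟩ := hF t R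
  let G : ℝ → (ι → ℝ) × (ι → ℝ) → (ι → ℝ) × (ι → ℝ) := fun s p => (p.2, F s p.1)
  have hG : ∀ s ∈ Ico 0 t, LipschitzOnWith (max 1 K) (G s) (closedBall 0 R) := by
    intro s hs
    have hfst : LipschitzOnWith K (F s ∘ Prod.fst) (closedBall (0 : (ι → ℝ) × (ι → ℝ)) R) := by
      simpa only [mul_one] using (hK s hs).comp LipschitzWith.prod_fst.lipschitzOnWith
        fun (p : (ι → ℝ) × (ι → ℝ)) hp =>
          mem_closedBall_zero_iff.2 ((norm_fst_le p).trans (mem_closedBall_zero_iff.1 hp))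
    exact LipschitzWith.prod_snd.lipschitzOnWith.prodMk hfst
  have hsol : ∀ v : ι → ℝ → ℝ, (∀ j, ContDiffOn ℝ 2 (v j) (Ici 0)) →
      (∀ s, 0 ≤ s → ∀ j, derIci (derIci (v j)) s = F s (fun k => v k s) j) →
      ∀ s ∈ Ico 0 t, HasDerivWithinAt (phasePoint v) (G s (phasePoint v s)) (Ici s) s :=
    fun v hv hv'' s hs => by
      convert hasDerivWithinAt_phasePoint hv hs.1 using 2
      exact (funext (hv'' s hs.1)).symm
  have hmem : ∀ v : ι → ℝ → ℝ, (∀ s ∈ Icc 0 t, ‖phasePoint v s‖ ≤ R) →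
      ∀ s ∈ Ico 0 t, phasePoint v s ∈ closedBall 0 R :=
    fun v hv s hs => mem_closedBall_zero_iff.2 (hv s (Ico_subset_Icc_self hs))
  have heq := ODE_solution_unique_of_mem_Icc_right hG
    ((continuousOn_phasePoint hu).mono hIcc) (hsol u hu hu'')
    (hmem u fun s hs => (hRu s hs).trans (le_max_left _ _))
    ((continuousOn_phasePoint hw).mono hIcc) (hsol w hw hw'')
    (hmem w fun s hs => (hRw s hs).trans (le_max_right _ _))
    (Prod.ext (funext h₀) (funext h₀')) ⟨ht, le_rfl⟩
  exact congrFun (congrArg Prod.fst heq) j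

lemma tsum_eq_sum_fin_of_eq_zero {M : Type*} [AddCommMonoid M] [TopologicalSpace M]
    {f : ℕ → M} {N : ℕ} (hf : ∀ i, N < i → f i = 0) :
    ∑' i, f i = ∑ i : Fin (N + 1), f i := by
  rw [tsum_eq_sum (s := Finset.range (N + 1)) fun i hi => hf i (by simpa using hi),
    Fin.sum_univ_eq_sum_range]

namespace WeakSol

variable {lam : ℕ → ℝ} {m : ℝ → ℝ} {a b : ℕ → ℝ} {v w : ℕ → ℝ → ℝ}

lemma continuousOn_energy (hv : WeakSol lam m a b v) :
    ContinuousOn (fun t => ∑' j, lam j ^ 2 * v j t ^ 2) (Ici 0) := by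
  obtain ⟨-, -, -, -, hsum, -, hcont, -⟩ := hv
  simp only [← mul_pow, mul_sub] at hsum hcont ⊢
  exact continuousOn_tsum_sq (x := fun t j => lam j * v j t) hsum hcont

theorem eq_zero_of_initial_eq_zero (hm : ContinuousOn m (Ici 0)) (hv : WeakSol lam m a b v)
    {i : ℕ} (hai : a i = 0) (hbi : b i = 0) : ∀ t, 0 ≤ t → v i t = 0 := by
  set c : ℝ → ℝ := fun t => -m (∑' j, lam j ^ 2 * v j t ^ 2) * lam i ^ 2
  have hc : ContinuousOn c (Ici 0) :=
    (hm.comp hv.continuousOn_energy fun t _ => mem_Ici.2 (by positivity)).neg.mul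
      continuousOn_const
  obtain ⟨hvC2, h₀, h₀', -, -, -, -, hode⟩ := hv
  have hF : ∀ T R : ℝ, ∃ K, ∀ t ∈ Ico 0 T,
      LipschitzOnWith K (fun y : Unit → ℝ => c t • y) (closedBall 0 R) := by
    intro T R
    obtain ⟨C, hC⟩ := isCompact_Icc.exists_bound_of_continuousOn (hc.mono Icc_subset_Ici_self)
    refine ⟨‖C‖₊, fun t ht => ((lipschitzWith_smul (c t)).weaken ?_).lipschitzOnWith⟩
    rw [← NNReal.coe_le_coe, coe_nnnorm, coe_nnnorm]
    exact (hC t (Ico_subset_Icc_self ht)).trans (le_abs_self C)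
  intro t ht
  -- `v i` is compared with `0` as a one-component system indexed by `Unit`.
  refine eq_of_secondOrderODE hF (u := fun _ => v i) (w := fun _ _ => 0) (fun _ => hvC2 i)
    (fun _ => contDiffOn_const) (fun s hs _ => ?_) (fun s _ _ => by simp [derIci])
    (fun _ => by simp [h₀ i, hai]) (fun _ => by simp only [h₀' i, hbi]; simp [derIci]) t ht ()
  simp only [Pi.smul_apply, smul_eq_mul, c]
  linarith [hode i s hs]

theorem eq_of_vanish_above (hm : LocallyLipschitzOn (Ici 0) m) (hv : WeakSol lam m a b v)
    (hw : WeakSol lam m a b w) {N : ℕ} (hvN : ∀ i, N < i → ∀ t, 0 ≤ t → v i t = 0)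
    (hwN : ∀ i, N < i → ∀ t, 0 ≤ t → w i t = 0) : ∀ i t, 0 ≤ t → v i t = w i t := by
  set F : (Fin (N + 1) → ℝ) → Fin (N + 1) → ℝ :=
    fun y j => -m (∑ k : Fin (N + 1), lam k ^ 2 * y k ^ 2) * lam j ^ 2 * y j
  have hF : ∀ T R : ℝ, ∃ K, ∀ t ∈ Ico 0 T, LipschitzOnWith K F (closedBall 0 R) := fun _ R =>
    ((locallyLipschitz_kirchhoffField hm fun k : Fin (N + 1) => lam k).locallyLipschitzOn
      |>.exists_lipschitzOnWith_of_compact (isCompact_closedBall 0 R)).imp fun _ hK _ _ => hK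
  have hode : ∀ u, WeakSol lam m a b u → (∀ i, N < i → ∀ t, 0 ≤ t → u i t = 0) →
      ∀ t, 0 ≤ t → ∀ j : Fin (N + 1), derIci (derIci (u j)) t = F (fun k => u k t) j := by
    intro u hu huN t ht j
    obtain ⟨-, -, -, -, -, -, -, hu''⟩ := hu
    have hσ := tsum_eq_sum_fin_of_eq_zero (f := fun k => lam k ^ 2 * u k t ^ 2) (N := N)
      fun k hk => by simp [huN k hk t ht]
    have hj := hu'' j t ht
    rw [hσ] at hj
    simp only [F]
    linarith
  have hv'' := hode v hv hvN
  have hw'' := hode w hw hwN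
  obtain ⟨hvC2, hv₀, hv₀', -⟩ := hv
  obtain ⟨hwC2, hw₀, hw₀', -⟩ := hw
  intro i t ht
  rcases le_or_gt i N with hi | hi
  · exact eq_of_secondOrderODE hF (fun j => hvC2 j) (fun j => hwC2 j) hv'' hw''
      (fun j => (hv₀ j).trans (hw₀ j).symm) (fun j => (hv₀' j).trans (hw₀' j).symm) t ht
      ⟨i, Nat.lt_succ_of_le hi⟩
  · rw [hvN i hi t ht, hwN i hi t ht]

end WeakSol

theorem stmt15_general (lam : ℕ → ℝ) (m : ℝ → ℝ)
    (hm_lip : ∀ x, 0 ≤ x → ∃ K : NNReal, ∃ s ∈ nhdsWithin x (Set.Ici 0),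
      LipschitzOnWith K m s)
    (a b : ℕ → ℝ) (N : ℕ) (ha : ∀ i, N < i → a i = 0) (hb : ∀ i, N < i → b i = 0) :
    (∀ v w : ℕ → ℝ → ℝ, WeakSol lam m a b v → WeakSol lam m a b w →
      ∀ i, ∀ t, 0 ≤ t → v i t = w i t) ∧
    (∀ v : ℕ → ℝ → ℝ, WeakSol lam m a b v →
      ∀ i, N < i → ∀ t, 0 ≤ t → v i t = 0) := by
  have hm : LocallyLipschitzOn (Ici 0) m := hm_lip
  have vanish : ∀ v, WeakSol lam m a b v → ∀ i, N < i → ∀ t, 0 ≤ t → v i t = 0 :=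
    fun v hv i hi => hv.eq_zero_of_initial_eq_zero hm.continuousOn (ha i hi) (hb i hi)
  exact ⟨fun v w hv hw => hv.eq_of_vanish_above hm hw (vanish v hv) (vanish w hw), vanish⟩

/-- for locally Lipschitz m and initial data with finitely many nonzero
components, global weak solutions are unique, and their components of index > N vanish
identically. -/
theorem stmt15 (lam : ℕ → ℝ) (hpos : ∀ i, 0 < lam i) (hmono : Monotone lam)
    (htop : Tendsto lam atTop atTop)
    (μ₁ : ℝ) (hμ₁ : 0 < μ₁) (m : ℝ → ℝ)
    (hm_lip : ∀ x, 0 ≤ x → ∃ K : NNReal, ∃ s ∈ nhdsWithin x (Set.Ici 0),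
      LipschitzOnWith K m s)
    (hm_lb : ∀ σ, 0 ≤ σ → μ₁ ≤ m σ)
    (a b : ℕ → ℝ) (hab : InEnergy lam a b)
    (N : ℕ) (hN : 0 < N) (ha : ∀ i, N < i → a i = 0) (hb : ∀ i, N < i → b i = 0) :
    (∀ v w : ℕ → ℝ → ℝ, WeakSol lam m a b v → WeakSol lam m a b w →
      ∀ i, ∀ t, 0 ≤ t → v i t = w i t) ∧
    (∀ v : ℕ → ℝ → ℝ, WeakSol lam m a b v →
      ∀ i, N < i → ∀ t, 0 ≤ t → v i t = 0) :=
  stmt15_general lam m hm_lip a b N ha hb
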